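/- arXiv:1512.09299 — 3 statements merged into one kernel-verified Lean document; each statement's English description precedes it below -/
import Mathlib

section
/- Let μ < λ be infinite cardinals. Then λ⁺ ↠_{Q¹} μ⁺ holds if and only if Chang's conjecture (λ⁺, λ) ↠ (μ⁺, μ) holds. -/
/-!
Q¹-reflection ⇒ Chang: well-order `M` in type `λ⁺` and add a binary function `F` such that
`F(a, ·)` injects the predecessors of `a` into `A`. Since `A` is not large in `M`, it is not
large in a `Q¹`-elementary `N` of size `μ⁺`, so `|A ∩ N| ≤ μ`; and for `a ∈ N` with `μ`
predecessors in `N`, `F(a, ·)` gives `|A ∩ N| ≥ μ`.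

Chang ⇒ Q¹-reflection: fix `A ⊆ M` of size `λ` and add, for every definable family
`S = φ(M, p)`, a function injecting `M` into `S` when `|S| = λ⁺`, and `S` into `A` otherwise. In
a Chang substructure `N` closed under these functions, `|S ∩ N| = |N|` in the first case and
`|S ∩ N| ≤ |A ∩ N| = μ < |N|` in the second.
-/

open FirstOrder Cardinal

universe u

namespace MMPaper

/-- `M ⊨ Qⁿ φ(x₀,…,x_{n-1}, p)` : there is a set `A ⊆ M` with `|A| = |M|` such that
`φ(a₀,…,a_{n-1}, p)` holds for all `a₀,…,a_{n-1} ∈ A`. -/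
def QSat {L : FirstOrder.Language.{u, u}} {M : Type u} [L.Structure M] (n : ℕ)
    (φ : L.Formula (Fin n ⊕ ℕ)) (p : ℕ → M) : Prop :=
  ∃ A : Set M, #A = #M ∧
    ∀ a : Fin n → M, (∀ i, a i ∈ A) → φ.Realize (Sum.elim a p)

/-- `N ≺_{Qⁿ} M`. -/
def QElem {L : FirstOrder.Language.{u, u}} {M : Type u} [L.Structure M] (n : ℕ)
    (N : L.ElementarySubstructure M) : Prop :=
  ∀ (φ : L.Formula (Fin n ⊕ ℕ)) (p : ℕ → N),
    QSat n φ p ↔ QSat n φ (fun i => (p i : M))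

/-- `λ ↠_{Qⁿ} μ`, for languages of cardinality at most `eta`. -/
def QRef (n : ℕ) (lam mu eta : Cardinal.{u}) : Prop :=
  ∀ (L : FirstOrder.Language.{u, u}), L.card ≤ eta →
    ∀ (M : Type u) [L.Structure M], #M = lam →
      ∃ N : L.ElementarySubstructure M, QElem n N ∧ #N = mu

/-- Chang's conjecture `(k, l) ↠ (m, n)`. -/
def ChangCC (k l m n : Cardinal.{u}) : Prop :=
  ∀ (L : FirstOrder.Language.{u, u}), L.card ≤ ℵ₀ →
    ∀ (M : Type u) [L.Structure M] (r : L.Relations 1),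
      #M = k → #{x : M | Language.Structure.RelMap r ![x]} = l →
      ∃ N : L.ElementarySubstructure M, #N = m ∧
        #{x : N | Language.Structure.RelMap r ![(x : M)]} = n

open Set Function FirstOrder.Language FirstOrder.Language.Structure

section Cardinal

variable {M : Type u}

lemma exists_mapsTo_injOn_of_mk_le {X Y : Set M} (h : #X ≤ #Y) :
    ∃ g : M → M, MapsTo g X Y ∧ InjOn g X := by
  classical
  obtain ⟨e⟩ := h
  refine ⟨fun x => if hx : x ∈ X then e ⟨x, hx⟩ else x, fun x hx => ?_, fun x hx y hy hxy => ?_⟩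
  · simp only [dif_pos hx, Subtype.coe_prop]
  · simpa only [dif_pos hx, dif_pos hy, Subtype.val_inj, e.injective.eq_iff, Subtype.mk.injEq]
      using hxy

/-- An injection of `X` into `Y` when `#X ≤ #Y`; junk (`id`) otherwise. -/
noncomputable def injWitness (X Y : Set M) : M → M :=
  if h : #X ≤ #Y then Classical.choose (exists_mapsTo_injOn_of_mk_le h) else id

lemma mapsTo_injWitness {X Y : Set M} (h : #X ≤ #Y) : MapsTo (injWitness X Y) X Y := by
  rw [injWitness, dif_pos h]
  exact (Classical.choose_spec (exists_mapsTo_injOn_of_mk_le h)).1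

lemma injOn_injWitness {X Y : Set M} (h : #X ≤ #Y) : InjOn (injWitness X Y) X := by
  rw [injWitness, dif_pos h]
  exact (Classical.choose_spec (exists_mapsTo_injOn_of_mk_le h)).2

lemma mk_preimage_val_le_of_mapsTo {N X Y : Set M} {g : M → M} (hN : MapsTo g N N)
    (hg : MapsTo g X Y) (hinj : InjOn g X) :
    #((↑) ⁻¹' X : Set N) ≤ #((↑) ⁻¹' Y : Set N) :=
  mk_le_of_injective (f := fun x => ⟨⟨g x, hN x.1.2⟩, hg x.2⟩) fun x y h =>
    Subtype.val_injective <| Subtype.val_injective <| hinj x.2 y.2 congr(($h).1.1)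

lemma mk_preimage_val_le_of_mapsTo_injWitness {N X Y : Set M} (h : #X ≤ #Y)
    (hN : MapsTo (injWitness X Y) N N) : #((↑) ⁻¹' X : Set N) ≤ #((↑) ⁻¹' Y : Set N) :=
  mk_preimage_val_le_of_mapsTo hN (mapsTo_injWitness h) (injOn_injWitness h)

lemma exists_wellOrder_mk_lt (α : Type u) :
    ∃ (r : α → α → Prop) (_ : IsWellOrder α r), ∀ a, #{b // r b a} < #α := by
  obtain ⟨r, hr, hord⟩ := Cardinal.exists_ord_eq α
  exact ⟨r, hr, fun a => Ordinal.card_typein (r := r) a ▸ card_typein_lt a hord⟩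

lemma exists_mk_lt_eq {α : Type u} (r : α → α → Prop) [IsWellOrder α r] {c : Cardinal.{u}}
    (hc : c < #α) : ∃ a, #{b // r b a} = c := by
  have hlt : c.ord < Ordinal.type r := (ord_lt_ord.2 hc).trans_le (ord_le_type r)
  refine ⟨Ordinal.enum r ⟨c.ord, hlt⟩, ?_⟩
  rw [← Ordinal.card_typein, Ordinal.typein_enum, card_ord]

end Cardinal

section ModelTheory

variable {L : FirstOrder.Language.{u, u}} {M : Type u} [L.Structure M]

def definedSet {α : Type*} (φ : L.Formula (Fin 1 ⊕ α)) (p : α → M) : Set M :=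
  {x | φ.Realize (Sum.elim (fun _ => x) p)}

lemma qSat_one_iff (φ : L.Formula (Fin 1 ⊕ ℕ)) (p : ℕ → M) :
    QSat 1 φ p ↔ #M ≤ #(definedSet φ p) := by
  refine ⟨fun ⟨A, hA, h⟩ => hA ▸ mk_le_mk_of_subset fun x hx => h (fun _ => x) fun _ => hx,
    fun h => ⟨definedSet φ p, le_antisymm (mk_set_le _) h, fun a ha => ?_⟩⟩
  rw [show a = fun _ => a 0 from funext fun i => congrArg a (Subsingleton.elim i 0)]
  exact ha 0

lemma definedSet_eq_preimage_val {α : Type*}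
    (N : L.ElementarySubstructure M) (φ : L.Formula (Fin 1 ⊕ α)) (p : α → N) :
    definedSet φ p = (↑) ⁻¹' definedSet φ (fun i => (p i : M)) := by
  ext x
  simp only [definedSet, mem_ofPred_eq, mem_preimage]
  rw [← N.subtype.map_formula, ElementarySubstructure.coe_subtype, Sum.comp_elim]
  rfl

lemma exists_formula_fin_params (φ : L.Formula (Fin 1 ⊕ ℕ)) :
    ∃ (n : ℕ) (ψ : L.Formula (Fin 1 ⊕ Fin n)), ∀ {K : Type u} [L.Structure K] (p : ℕ → K),
      definedSet ψ (fun i => p i) = definedSet φ p := by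
  classical
  let n := φ.freeVarFinset.sup (Sum.elim (fun _ => 0) Nat.succ)
  have hlt : ∀ k, Sum.inr k ∈ φ.freeVarFinset → k < n := fun k hk =>
    Finset.le_sup (f := Sum.elim (fun _ => 0) Nat.succ) hk
  let g : φ.freeVarFinset → Fin 1 ⊕ Fin n := fun x => match x with
    | ⟨Sum.inl i, _⟩ => Sum.inl i
    | ⟨Sum.inr k, hk⟩ => Sum.inr ⟨k, hlt k hk⟩
  refine ⟨n, φ.restrictFreeVar g, fun p => Set.ext fun x => ?_⟩
  refine BoundedFormula.realize_restrictFreeVar _ fun a => ?_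
  match a with
  | ⟨Sum.inl _, _⟩ => rfl
  | ⟨Sum.inr _, _⟩ => rfl

end ModelTheory

section Reduct

variable {L L' : FirstOrder.Language.{u, u}} {M : Type u} [L.Structure M] [L'.Structure M]

lemma realize_val_comp_iff (S : L'.ElementarySubstructure M) {n : ℕ}
    (ψ : L'.BoundedFormula Empty n) (x : Fin n → S) :
    ψ.Realize default (Subtype.val ∘ x) ↔ ψ.Realize default x := by
  rw [← S.subtype.map_boundedFormula, ElementarySubstructure.coe_subtype,
    Unique.eq_default (Subtype.val ∘ default)]

def elementarySubstructureReduct (ϕ : L →ᴸ L') [ϕ.IsExpansionOn M]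
    (S : L'.ElementarySubstructure M) : L.ElementarySubstructure M :=
  (ϕ.substructureReduct S).toElementarySubstructure fun n φ x a h => by
    let x' : Fin n → S := fun i => ⟨x i, (x i).2⟩
    have hS : (ϕ.onBoundedFormula φ).ex.Realize default x' := by
      rw [← realize_val_comp_iff, BoundedFormula.realize_ex]
      exact ⟨a, (ϕ.realize_onBoundedFormula φ).2 h⟩
    obtain ⟨b, hb⟩ := BoundedFormula.realize_ex.1 hS
    refine ⟨⟨b, b.2⟩, (ϕ.realize_onBoundedFormula φ).1 ?_⟩
    rw [← realize_val_comp_iff, Fin.comp_snoc] at hb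
    exact hb

end Reduct

section Expansion

variable {L : FirstOrder.Language.{u, u}} {M : Type u} [L.Structure M]

lemma card_sum_le_aleph0 {L' : FirstOrder.Language.{u, u}} [Countable L'.Symbols]
    (hL : L.card ≤ ℵ₀) : (L.sum L').card ≤ ℵ₀ := by
  rw [card_sum, lift_id, lift_id]
  exact add_le_aleph0.2 ⟨hL, mk_le_aleph0 (α := L'.Symbols)⟩

lemma mapsTo_funMap_snoc (S : L.Substructure M) {n : ℕ} (f : L.Functions (n + 1))
    {p : Fin n → M} (hp : ∀ i, p i ∈ S) : MapsTo (fun x => funMap f (Fin.snoc p x)) S S :=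
  fun x hx => S.fun_mem f _ fun i => Fin.lastCases (by simpa) (fun j => by simpa using hp j) i

noncomputable def transferMap (A S : Set M) : M → M :=
  if #M ≤ #S then injWitness univ S else injWitness S A

variable (L) in
def transferLanguage : FirstOrder.Language.{u, u} where
  Functions
    | 0 => PEmpty
    | n + 1 => L.Formula (Fin 1 ⊕ Fin n)
  Relations
    | 1 => PUnit
    | _ => PEmpty

instance [Countable L.Symbols] : Countable (transferLanguage L).Symbols := by
  have : ∀ n, Countable ((transferLanguage L).Functions n)
    | 0 => inferInstanceAs (Countable PEmpty)
    | n + 1 => inferInstanceAs (Countable (L.Formula (Fin 1 ⊕ Fin n)))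
  have : ∀ n, Countable ((transferLanguage L).Relations n)
    | 1 => inferInstanceAs (Countable PUnit)
    | 0 | n + 2 => inferInstanceAs (Countable PEmpty)
  infer_instance

/-- The `(n+1)`-ary symbol `ψ` acts as `transferMap A (definedSet ψ p)` on its last argument,
with the first `n` as the parameters `p`; the relation symbol names `A`. -/
noncomputable abbrev transferStructure (A : Set M) : (transferLanguage L).Structure M where
  funMap {n} f v := match n, f with
    | n + 1, ψ => transferMap A (definedSet ψ (Fin.init v)) (v (Fin.last n))
  RelMap {n} R v := match n, R with
    | 1, _ => v 0 ∈ A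

end Expansion

section ChangToReflection

variable {L : FirstOrder.Language.{u, u}} {M : Type u} [L.Structure M]

lemma qElem_one_of_mapsTo_transferMap (N : L.ElementarySubstructure M) {A : Set M}
    (hMA : #M ≤ Order.succ #A) (hNA : #((↑) ⁻¹' A : Set N) < #N)
    (hclosed : ∀ (n : ℕ) (ψ : L.Formula (Fin 1 ⊕ Fin n)) (p : Fin n → N),
      MapsTo (transferMap A (definedSet ψ fun i => (p i : M))) N N) :
    QElem 1 N := by
  intro φ p
  obtain ⟨n, ψ, hψ⟩ := exists_formula_fin_params φ
  set S := definedSet φ fun i => (p i : M)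
  have hS := hclosed n ψ (fun i => p i)
  rw [hψ (fun i => (p i : M))] at hS
  rw [qSat_one_iff, qSat_one_iff, definedSet_eq_preimage_val]
  by_cases hlarge : #M ≤ #S
  · rw [transferMap, if_pos hlarge] at hS
    refine iff_of_true ?_ hlarge
    calc #N = #((Subtype.val : N → M) ⁻¹' univ) := by rw [preimage_univ, mk_univ]
      _ ≤ #((Subtype.val : N → M) ⁻¹' S) :=
        mk_preimage_val_le_of_mapsTo_injWitness (by rwa [mk_univ]) hS
  · rw [transferMap, if_neg hlarge] at hS
    have hSA : #S ≤ #A := Order.lt_succ_iff.1 ((not_le.1 hlarge).trans_le hMA)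
    refine iff_of_false (fun h => ?_) hlarge
    exact (h.trans (mk_preimage_val_le_of_mapsTo_injWitness hSA hS)).not_gt hNA

theorem qRef_one_of_changCC {lam mu : Cardinal.{u}}
    (h : ChangCC (Order.succ lam) lam (Order.succ mu) mu) :
    QRef 1 (Order.succ lam) (Order.succ mu) ℵ₀ := by
  intro L hL M _ hM
  obtain ⟨A, hA⟩ : ∃ A : Set M, #A = lam := le_mk_iff_exists_set.1 (hM ▸ Order.le_succ lam)
  have : Countable L.Symbols := mk_le_aleph0_iff.1 hL
  let _ := transferStructure (L := L) A
  obtain ⟨N, hN, hNA⟩ := h (L.sum (transferLanguage L)) (card_sum_le_aleph0 hL) M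
    (Sum.inr (show (transferLanguage L).Relations 1 from PUnit.unit)) hM hA
  refine ⟨elementarySubstructureReduct LHom.sumInl N, ?_, hN⟩
  refine qElem_one_of_mapsTo_transferMap _ (by rw [hM, hA]) (hNA ▸ hN ▸ Order.lt_succ mu)
    fun n ψ p => ?_
  refine (mapsTo_funMap_snoc N.toSubstructure
    (Sum.inr (show (transferLanguage L).Functions (n + 1) from ψ)) fun i => (p i).2).congr
    fun x _ => ?_
  change transferMap A (definedSet ψ (Fin.init (Fin.snoc (α := fun _ => M) _ x)))
    (Fin.snoc (α := fun _ => M) _ x (Fin.last n)) = _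
  rw [Fin.init_snoc, Fin.snoc_last]

end ChangToReflection

section ReflectionToChang

variable {L : FirstOrder.Language.{u, u}} {M : Type u} [L.Structure M]

lemma mk_relMap_lt_of_qElem_one {N : L.ElementarySubstructure M} (hN : QElem 1 N)
    (r : L.Relations 1) (hr : #{x : M | RelMap r ![x]} < #M) :
    #{x : N | RelMap r ![(x : M)]} < #N := by
  have : Nonempty M := mk_ne_zero_iff.1 (pos_of_gt hr).ne'
  let φ : L.Formula (Fin 1 ⊕ ℕ) := r.formula₁ (Term.var (Sum.inl 0))
  have hφ : definedSet φ (fun _ => (Classical.arbitrary N : M)) = {x : M | RelMap r ![x]} := by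
    ext x
    simp [φ, definedSet]
  have hiff := hN φ fun _ => Classical.arbitrary N
  rw [qSat_one_iff, qSat_one_iff, definedSet_eq_preimage_val, hφ] at hiff
  exact not_le.1 fun h => hr.not_ge (hiff.1 h)

def binaryFunLanguage : FirstOrder.Language.{u, u} where
  Functions
    | 2 => PUnit
    | _ => PEmpty
  Relations _ := PEmpty

instance : Countable binaryFunLanguage.{u}.Symbols := by
  have : ∀ n, Countable (binaryFunLanguage.{u}.Functions n)
    | 2 => inferInstanceAs (Countable PUnit)
    | 0 | 1 | n + 3 => inferInstanceAs (Countable PEmpty)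
  have : ∀ n, Countable (binaryFunLanguage.{u}.Relations n) :=
    fun _ => inferInstanceAs (Countable PEmpty)
  infer_instance

abbrev binaryFunStructure (F : M → M → M) : binaryFunLanguage.Structure M where
  funMap {n} f v := match n, f with
    | 2, _ => F (v 0) (v 1)
  RelMap R := PEmpty.elim R

theorem changCC_of_qRef_one {lam mu : Cardinal.{u}}
    (h : QRef 1 (Order.succ lam) (Order.succ mu) ℵ₀) :
    ChangCC (Order.succ lam) lam (Order.succ mu) mu := by
  intro L hL M _ r hM hA
  set A := {x : M | RelMap r ![x]}
  obtain ⟨wo, _, hwo⟩ := exists_wellOrder_mk_lt M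
  have hF : ∀ a, #{b | wo b a} ≤ #A := fun a => hA ▸ Order.lt_succ_iff.1 (hM ▸ hwo a)
  have : Countable L.Symbols := mk_le_aleph0_iff.1 hL
  let _ := binaryFunStructure fun a => injWitness {b | wo b a} A
  obtain ⟨N, hQ, hN⟩ := h (L.sum binaryFunLanguage) (card_sum_le_aleph0 hL) M hM
  let N' := elementarySubstructureReduct LHom.sumInl N
  refine ⟨N', hN, le_antisymm ?_ ?_⟩
  · have hr : #{x : M | RelMap (L := L.sum binaryFunLanguage) (Sum.inl r) ![x]} < #M :=
      hM ▸ hA ▸ Order.lt_succ lam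
    exact Order.lt_succ_iff.1 (hN ▸ mk_relMap_lt_of_qElem_one hQ (Sum.inl r) hr)
  · obtain ⟨a, ha⟩ := exists_mk_lt_eq (Subrel wo (· ∈ N)) (hN ▸ Order.lt_succ mu)
    rw [← ha]
    refine mk_preimage_val_le_of_mapsTo_injWitness (hF a) ?_
    refine (mapsTo_funMap_snoc N.toSubstructure
      (Sum.inr (show binaryFunLanguage.Functions 2 from PUnit.unit)) (p := ![a]) ?_).congr
      fun x _ => ?_
    · simp
    · rfl

end ReflectionToChang

theorem q1_reflection_iff_changCC_general (lam mu : Cardinal.{u}) :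
    QRef 1 (Order.succ lam) (Order.succ mu) ℵ₀ ↔
      ChangCC (Order.succ lam) lam (Order.succ mu) mu :=
  ⟨changCC_of_qRef_one, qRef_one_of_changCC⟩

/-- For infinite cardinals `μ < λ`, `λ⁺ ↠_{Q¹} μ⁺` holds iff Chang's
conjecture `(λ⁺, λ) ↠ (μ⁺, μ)` holds. -/
theorem q1_reflection_iff_changCC (lam mu : Cardinal.{u})
    (hmu : ℵ₀ ≤ mu) (hlt : mu < lam) :
    QRef 1 (Order.succ lam) (Order.succ mu) ℵ₀ ↔
      ChangCC (Order.succ lam) lam (Order.succ mu) mu :=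
  q1_reflection_iff_changCC_general lam mu

end MMPaper
end

section
/- Let λ be an infinite cardinal and μ an infinite cardinal with μ ≤ λ. If λ⁺ ↠_{Q¹} μ holds, then μ is a successor cardinal (and in particular μ is regular). -/
/-!
Realize `λ⁺` as a well-order `W`, fix `P ⊆ W` of size `λ`, and a binary function `f` such that
`f(·, b)` injects the initial segment below `b` into `P`. Since `|P| < |W|`, the formula `P x` is
not `Q¹`-true in `(W, P, f)`, so in a `Q¹`-elementary substructure `N` of size `μ` the trace
`N ∩ P` has some size `ν < μ`. As `N` is closed under `f`, every initial segment of `N`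
injects into `N ∩ P`, so `N` has order type at most `ν⁺` and `μ = ν⁺`; `ν` is infinite
because `μ` is.
-/

open FirstOrder Cardinal

universe u

namespace MMPaper

open Set

theorem mk_le_succ_of_forall_mk_Iio_le {α : Type u} [LinearOrder α] [WellFoundedLT α]
    {κ : Cardinal.{u}} (h : ∀ b : α, #(Iio b) ≤ κ) : #α ≤ Order.succ κ := by
  by_contra! hlt
  have hord : (Order.succ κ).ord < Ordinal.type ((· < ·) : α → α → Prop) :=
    (ord_lt_ord.2 hlt).trans_le (ord_le.2 (Ordinal.card_type (α := α) (· < ·)).ge)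
  obtain ⟨b, hb⟩ := Ordinal.typein_surj (· < ·) hord
  have hIio : #(Iio b) = Order.succ κ := by
    rw [← card_ord (Order.succ κ), ← hb]
    rfl
  exact (Order.lt_succ κ).not_ge (hIio ▸ h b)

theorem exists_injOn_Iio_mapsTo {W : Type u} [LinearOrder W] {κ : Cardinal.{u}} (hκ : κ ≤ #W)
    (h : ∀ b : W, #(Iio b) ≤ κ) :
    ∃ (P : Set W) (f : W → W → W), #P = κ ∧
      ∀ b, InjOn (f · b) (Iio b) ∧ MapsTo (f · b) (Iio b) P := by
  obtain ⟨P, rfl⟩ := le_mk_iff_exists_set.1 hκ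
  have e (b : W) : Iio b ↪ P := ((le_def _ _).1 (h b)).some
  refine ⟨P, fun x b => if hx : x < b then e b ⟨x, hx⟩ else x, rfl, fun b => ⟨?_, ?_⟩⟩
  · intro x (hx : x < b) y (hy : y < b) hxy
    simp only [dif_pos hx, dif_pos hy] at hxy
    exact congrArg Subtype.val ((e b).injective (Subtype.ext hxy))
  · intro x (hx : x < b)
    simp only [dif_pos hx]
    exact (e b _).2

section QSat

variable {L : FirstOrder.Language.{u, u}} {M : Type u} [L.Structure M]

theorem qSat_one_iff_s1 (φ : L.Formula (Fin 1 ⊕ ℕ)) (p : ℕ → M) :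
    QSat 1 φ p ↔ #{x : M | φ.Realize (Sum.elim (fun _ => x) p)} = #M := by
  constructor
  · rintro ⟨A, hA, hφ⟩
    exact le_antisymm (mk_set_le _)
      (hA ▸ mk_le_mk_of_subset fun x hx => hφ (fun _ => x) fun _ => hx)
  · intro h
    refine ⟨_, h, fun a ha => ?_⟩
    rw [show a = fun _ => a 0 from funext fun i => congrArg a (Subsingleton.elim i 0)]
    exact ha 0

theorem QElem.mk_realize_lt {N : L.ElementarySubstructure M} (hN : QElem 1 N)
    {φ : L.Formula (Fin 1 ⊕ ℕ)} {p : ℕ → N}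
    (h : #{x : M | φ.Realize (Sum.elim (fun _ => x) fun i => (p i : M))} < #M) :
    #{x : N | φ.Realize (Sum.elim (fun _ => x) p)} < #N := by
  refine (mk_set_le _).lt_of_ne fun hfull => h.ne ?_
  rw [← qSat_one_iff_s1, ← hN, qSat_one_iff_s1]
  exact hfull

end QSat

/-- One unary relation symbol and one binary function symbol. -/
def relFunLang : FirstOrder.Language.{u, u} where
  Functions n := ULift (PLift (n = 2))
  Relations n := ULift (PLift (n = 1))

theorem card_relFunLang_le : relFunLang.{u}.card ≤ ℵ₀ := by
  have : Countable relFunLang.{u}.Symbols := by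
    unfold Language.Symbols relFunLang
    infer_instance
  exact mk_le_aleph0

def relSym : relFunLang.{u}.Relations 1 := ⟨⟨rfl⟩⟩

def funSym : relFunLang.{u}.Functions 2 := ⟨⟨rfl⟩⟩

abbrev relFunStructure {W : Type u} (P : Set W) (f : W → W → W) : relFunLang.Structure W where
  funMap {n} h x :=
    f (x ⟨0, by have := h.down.down; omega⟩) (x ⟨1, by have := h.down.down; omega⟩)
  RelMap {n} h x := x ⟨0, by have := h.down.down; omega⟩ ∈ P

def memFormula : relFunLang.{u}.Formula (Fin 1 ⊕ ℕ) :=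
  relSym.formula₁ (Language.Term.var (Sum.inl 0))

section Model

variable {W : Type u} (P : Set W) (f : W → W → W)

theorem apply_mem_substructure {x b : W} :
    letI := relFunStructure P f
    ∀ S : relFunLang.Substructure W, x ∈ S → b ∈ S → f x b ∈ S := by
  let := relFunStructure P f
  intro S hx hb
  refine S.fun_mem funSym ![x, b] fun i => ?_
  fin_cases i
  exacts [hx, hb]

theorem mk_eq_succ_of_qElem [LinearOrder W] [WellFoundedLT W] (hP : #P < #W)
    (hf : ∀ b, InjOn (f · b) (Iio b)) (hfP : ∀ b, MapsTo (f · b) (Iio b) P) :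
    letI := relFunStructure P f
    ∀ (N : relFunLang.ElementarySubstructure W) [Nonempty N], QElem 1 N →
      #N = Order.succ #{x : N | (x : W) ∈ P} := by
  let := relFunStructure P f
  intro N _ hN
  have hT : #{x : N | (x : W) ∈ P} < #N :=
    -- `memFormula` defines `P`, so its trace in `N` is `N ∩ P`
    hN.mk_realize_lt (φ := memFormula) (p := fun _ => Classical.arbitrary N) hP
  have hIio : ∀ b : N, #(Iio b) ≤ #{x : N | (x : W) ∈ P} := by
    intro b
    refine mk_le_of_injective (f := fun x : Iio b =>
      ⟨⟨f x b, apply_mem_substructure P f N.toSubstructure x.1.2 b.2⟩, hfP b x.2⟩) ?_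
    intro x y hxy
    exact Subtype.ext (Subtype.ext (hf b x.2 y.2 (congrArg (fun z => ((z.1 : N) : W)) hxy)))
  exact le_antisymm (mk_le_succ_of_forall_mk_Iio_le hIio) (Order.succ_le_of_lt hT)

end Model

theorem q1_reflection_target_is_successor_general (lam mu : Cardinal.{u})
    (hmu : ℵ₀ ≤ mu)
    (h : QRef 1 (Order.succ lam) mu ℵ₀) :
    (∃ ν : Cardinal.{u}, mu = Order.succ ν) ∧ mu.IsRegular := by
  have hIio (b : (Order.succ lam).ord.ToType) : #(Iio b) ≤ lam :=
    Order.lt_succ_iff.1 (by simpa using mk_Iio_lt b)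
  obtain ⟨P, f, hP, hf⟩ :=
    exists_injOn_Iio_mapsTo ((Order.le_succ lam).trans_eq (mk_ord_toType _).symm) hIio
  let := relFunStructure P f
  obtain ⟨N, hQ, hN⟩ := h relFunLang card_relFunLang_le _ (mk_ord_toType _)
  have : Nonempty N := mk_ne_zero_iff.1 (hN ▸ (aleph0_pos.trans_le hmu).ne')
  have hPW : #P < #(Order.succ lam).ord.ToType :=
    (hP.trans_lt (Order.lt_succ lam)).trans_eq (mk_ord_toType _).symm
  have hsucc := hN ▸ mk_eq_succ_of_qElem P f hPW (fun b => (hf b).1) (fun b => (hf b).2) N hQ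
  set ν := #{x : N | (x : (Order.succ lam).ord.ToType) ∈ P}
  have hν : ℵ₀ ≤ ν := not_lt.1 fun hlt =>
    (isSuccLimit_aleph0.succ_lt hlt).not_ge (hsucc ▸ hmu)
  exact ⟨⟨ν, hsucc⟩, hsucc ▸ isRegular_succ hν⟩

/-- If `λ⁺ ↠_{Q¹} μ` for infinite `μ ≤ λ`, then `μ` is a successor cardinal,
and in particular `μ` is regular. -/
theorem q1_reflection_target_is_successor (lam mu : Cardinal.{u})
    (hlam : ℵ₀ ≤ lam) (hmu : ℵ₀ ≤ mu) (hle : mu ≤ lam)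
    (h : QRef 1 (Order.succ lam) mu ℵ₀) :
    (∃ ν : Cardinal.{u}, mu = Order.succ ν) ∧ mu.IsRegular :=
  q1_reflection_target_is_successor_general lam mu hmu h

end MMPaper
end

section
/- Assume λ ↠_{Q¹} μ, where μ ≤ λ are infinite cardinals. Then for every first-order structure 𝒜 over a countable language whose universe is a set of ordinals of order type λ, and whose language contains a binary relation interpreted as the usual ordering of the ordinals, there is an elementary substructure ℬ ≺ 𝒜 whose universe has order type exactly μ. -/
/-!
Take a `Q¹`-elementary substructure `N` of cardinality `μ`. Its order type is `μ` (the initial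
ordinal) as soon as every proper initial segment of `N` has fewer than `μ` elements. If some
`{x ∈ N | x < b}` had `μ = |N|` elements, then `Q¹ x, x < b` would hold in `N`, hence in `S`,
so `λ = |S|` ordinals of `S` would lie below `b`; this is impossible because `S` has order
type `λ` (the initial ordinal).
-/

open FirstOrder Cardinal

universe u

namespace MMPaper

open Set Ordinal FirstOrder.Language Structure

theorem _root_.Cardinal.ord_mk_eq_typeLT_of_forall_mk_Iio_lt {α : Type u} [LinearOrder α]
    [WellFoundedLT α] (h : ∀ i : α, #(Iio i) < #α) : (#α).ord = typeLT α := by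
  refine le_antisymm (ord_le_type _) (not_lt.1 fun hlt => ?_)
  obtain ⟨i, hi⟩ := typein_surj (· < ·) hlt
  have hcard := congrArg Ordinal.card hi
  rw [card_typein, card_ord] at hcard
  exact (h i).ne hcard

section RelationAtom

variable {L : FirstOrder.Language.{u, u}} {M : Type u} [L.Structure M]

theorem _root_.FirstOrder.Language.ElementarySubstructure.relMap_coe₂
    (N : L.ElementarySubstructure M) (r : L.Relations 2) (x y : N) :
    RelMap r ![(x : M), y] ↔ RelMap r ![x, y] := by
  rw [← N.subtype.map_rel r, ← FinVec.map_eq]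
  rfl

theorem qSat_one_formula₂_iff (r : L.Relations 2) (p : ℕ → M) :
    QSat 1 (r.formula₂ (.var (Sum.inl 0)) (.var (Sum.inr 0))) p ↔
      #{a : M | RelMap r ![a, p 0]} = #M := by
  simp only [QSat, Formula.realize_rel₂, Term.realize_var, Sum.elim_inl, Sum.elim_inr]
  constructor
  · rintro ⟨A, hA, hAr⟩
    exact le_antisymm (mk_set_le _)
      (hA ▸ mk_le_mk_of_subset fun a ha => hAr (fun _ => a) fun _ => ha)
  · intro h
    exact ⟨_, h, fun a ha => ha 0⟩

theorem QElem.mk_setOf_relMap_eq_iff {N : L.ElementarySubstructure M} (hN : QElem 1 N)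
    (r : L.Relations 2) (c : N) :
    #{a : N | RelMap r ![a, c]} = #N ↔ #{a : M | RelMap r ![a, (c : M)]} = #M := by
  rw [← qSat_one_formula₂_iff r (fun _ => c), hN, qSat_one_formula₂_iff]

theorem QElem.mk_setOf_relMap_lt {N : L.ElementarySubstructure M} (hN : QElem 1 N)
    (r : L.Relations 2) (hM : ∀ c : M, #{a : M | RelMap r ![a, c]} < #M) (c : N) :
    #{a : N | RelMap r ![a, c]} < #N :=
  (mk_set_le _).lt_of_ne fun h => (hM c).ne ((hN.mk_setOf_relMap_eq_iff r c).1 h)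

end RelationAtom

theorem elementary_substructure_of_ordertype_general (lam mu : Cardinal.{u + 1})
    (h : QRef 1 lam mu ℵ₀)
    (L : FirstOrder.Language.{u + 1, u + 1}) (hL : L.card ≤ ℵ₀)
    (S : Set Ordinal.{u}) [L.Structure S]
    (hS : Ordinal.type ((· < ·) : S → S → Prop) = lam.ord)
    (r : L.Relations 2)
    (hr : ∀ x y : S, Language.Structure.RelMap r ![x, y] ↔ (x : Ordinal.{u}) < y) :
    ∃ N : L.ElementarySubstructure S,
      Ordinal.type
        ((· < ·) : {o : Ordinal.{u} // ∃ x : S, x ∈ N ∧ (x : Ordinal.{u}) = o} →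
          {o : Ordinal.{u} // ∃ x : S, x ∈ N ∧ (x : Ordinal.{u}) = o} → Prop) = mu.ord := by
  have hcard : #S = lam := by simpa using congrArg Ordinal.card hS
  obtain ⟨N, hQ, hN⟩ := h L hL S hcard
  have hS_small (c : S) : #{a : S | RelMap r ![a, c]} < #S := by
    rw [show {a : S | RelMap r ![a, c]} = Iio c from Set.ext fun a => hr a c]
    exact mk_Iio_lt c (by rw [hS, hcard])
  have hN_Iio (b : N) : Iio b = {a : N | RelMap r ![a, b]} := by
    ext a
    rw [mem_ofPred_eq, mem_Iio, ← N.relMap_coe₂, hr]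
    rfl
  refine ⟨N, ?_⟩
  calc typeLT ↥(Subtype.val '' (N : Set S))
      = typeLT N := ((Subtype.strictMono_coe _).strictMonoOn _).orderIso.ordinalType_congr.symm
    _ = (#N).ord := (ord_mk_eq_typeLT_of_forall_mk_Iio_lt fun b =>
        hN_Iio b ▸ hQ.mk_setOf_relMap_lt r hS_small b).symm
    _ = mu.ord := by rw [hN]

/-- Assume `λ ↠_{Q¹} μ` for infinite cardinals `μ ≤ λ`.  Then every structure
over a countable language whose universe is a set of ordinals of order type `λ`, whose
language contains a binary relation symbol interpreted as the usual order of the ordinals,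
has an elementary substructure whose universe has order type exactly `μ`. -/
theorem elementary_substructure_of_ordertype (lam mu : Cardinal.{u + 1})
    (hmu : ℵ₀ ≤ mu) (hle : mu ≤ lam)
    (h : QRef 1 lam mu ℵ₀)
    (L : FirstOrder.Language.{u + 1, u + 1}) (hL : L.card ≤ ℵ₀)
    (S : Set Ordinal.{u}) [L.Structure S]
    (hS : Ordinal.type ((· < ·) : S → S → Prop) = lam.ord)
    (r : L.Relations 2)
    (hr : ∀ x y : S, Language.Structure.RelMap r ![x, y] ↔ (x : Ordinal.{u}) < y) :
    ∃ N : L.ElementarySubstructure S,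
      Ordinal.type
        ((· < ·) : {o : Ordinal.{u} // ∃ x : S, x ∈ N ∧ (x : Ordinal.{u}) = o} →
          {o : Ordinal.{u} // ∃ x : S, x ∈ N ∧ (x : Ordinal.{u}) = o} → Prop) = mu.ord :=
  elementary_substructure_of_ordertype_general lam mu h L hL S hS r hr

end MMPaper
end
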